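/- In the redundancy construction with K ≥ 2 identical indicator experts on K points of a uniform (2K−1)-point space and K−1 orthogonal specialist experts, with α = (K/(2K−1))^{3/2}, β = (1/(2K−1))^{3/2}, and λ = β: for any size-K subset S containing exactly t experts from the identical block (1 ≤ t ≤ K), the determinant det(𝒦_S + λ I) equals D(t) = β^{K−1} · 2^{K−t} · (β + tα), and D(t) is strictly decreasing in t on {1,...,K}; consequently every size-K maximizer of log det(𝒦_S + λ I) contains exactly one expert from the identical block together with all K−1 specialists. -/

import Mathlib

open Matrix Finset

/-- Principal submatrix of `K` indexed by a finite set `S`. -/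
noncomputable def subK {n : ℕ} (K : Matrix (Fin n) (Fin n) ℝ) (S : Finset (Fin n)) :
    Matrix {x // x ∈ S} {x // x ∈ S} ℝ :=
  K.submatrix (fun i => i.1) (fun j => j.1)

/-- Expert outputs of the redundancy construction on `X = Fin (2k − 1)`:
experts `e < k` are identical indicators of the first `k` points (`a_1, …, a_K`),
experts `e ≥ k` are the pairwise orthogonal specialists `1{x = b_j}`. -/
noncomputable def redExpert (k : ℕ) (e x : Fin (2 * k - 1)) : ℝ :=
  if (e : ℕ) < k then (if (x : ℕ) < k then 1 else 0)
  else (if (x : ℕ) = (e : ℕ) then 1 else 0)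

/-- Expectation under the uniform distribution on `Fin (2k − 1)`. -/
noncomputable def redExp (k : ℕ) (g : Fin (2 * k - 1) → ℝ) : ℝ :=
  (∑ x, g x) / ((2 * k - 1 : ℕ) : ℝ)

/-- ACP importance of expert `e` in the redundancy construction (deterministic router,
so `I_e = √(E[f_e²])`). -/
noncomputable def redImp (k : ℕ) (e : Fin (2 * k - 1)) : ℝ :=
  Real.sqrt (redExp k fun x => redExpert k e x ^ 2)

/-- The importance-weighted kernel `𝒦_ij = √(I_i I_j) · E[f_i f_j]`. -/
noncomputable def redKer (k : ℕ) : Matrix (Fin (2 * k - 1)) (Fin (2 * k - 1)) ℝ :=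
  fun i j => Real.sqrt (redImp k i * redImp k j) * redExp k fun x => redExpert k i x * redExpert k j x

/-- `α = (K/(2K−1))^{3/2}`. -/
noncomputable def redAlpha (k : ℕ) : ℝ := ((k : ℝ) / (2 * (k : ℝ) - 1)) ^ ((3 : ℝ) / 2)

/-- `β = (1/(2K−1))^{3/2}`. -/
noncomputable def redBeta (k : ℕ) : ℝ := ((1 : ℝ) / (2 * (k : ℝ) - 1)) ^ ((3 : ℝ) / 2)

/-- `D(t) = β^{K−1} · 2^{K−t} · (β + tα)`. -/
noncomputable def redD (k t : ℕ) : ℝ :=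
  redBeta k ^ (k - 1) * (2 : ℝ) ^ (k - t) * (redBeta k + (t : ℝ) * redAlpha k)

/-!
With `λ = β`, on a subset `S` with `t` identical experts the matrix `𝒦_S + βI` is the diagonal
matrix with entries `β` on the identical block and `2β` on the specialists, plus `α` times the
rank-one matrix `𝟙 𝟙ᵀ` of the indicator vector of the block. The matrix determinant lemma gives
`β^t (2β)^(K-t) (1 + tα/β) = D(t)`, and `D(t) - D(t+1)` is a positive multiple of
`β + (t-1)α > 0`. A size-`K` subset must contain an identical expert, since there are only
`K - 1` specialists, and comparing with `{a_1, b_2, …, b_K}` forces a maximizer to have `t = 1`.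
-/

theorem det_diagonal_add_vecMulVec {n R : Type*} [Fintype n] [DecidableEq n]
    [Field R] (d u v : n → R) (hd : ∀ i, d i ≠ 0) :
    (diagonal d + vecMulVec u v).det = (∏ i, d i) * (1 + ∑ i, v i * u i / d i) := by
  have factor : diagonal d + vecMulVec u v = diagonal d * (1 + vecMulVec (u / d) v) := by
    ext i j
    by_cases hij : i = j <;>
      simp [hij, vecMulVec_apply, mul_add, mul_div_cancel₀, hd, ← mul_assoc]
  rw [factor, det_mul, det_diagonal, vecMulVec_eq Unit, det_one_add_replicateCol_mul_replicateRow]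
  simp [dotProduct, mul_div_assoc]

theorem det_of_ite_and_add_smul_one {ι : Type*} [Fintype ι] [DecidableEq ι] (p : ι → Prop)
    [DecidablePred p] (a b c : ℝ) (hc : c ≠ 0) (hbc : b + c ≠ 0) :
    (Matrix.of (fun i j => if p i ∧ p j then a else if i = j then b else 0) + c • 1).det =
      c ^ #{i | p i} * (b + c) ^ #{i | ¬p i} * (1 + #{i | p i} * a / c) := by
  let d : ι → ℝ := fun i => if p i then c else b + c
  let u : ι → ℝ := fun i => if p i then 1 else 0
  have rank_one : Matrix.of (fun i j => if p i ∧ p j then a else if i = j then b else 0) + c • 1 =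
      diagonal d + vecMulVec u (a • u) := by
    ext i j
    by_cases hi : p i <;> by_cases hj : p j <;> by_cases hij : i = j <;>
      simp_all [d, u, vecMulVec_apply]; ring
  have sum_eq : ∑ i, (a • u) i * u i / d i = ∑ i, if p i then a / c else 0 := by
    refine sum_congr rfl fun i _ => ?_
    by_cases hi : p i <;> simp [d, u, hi]
  rw [rank_one, det_diagonal_add_vecMulVec _ _ _ fun i => by
    by_cases hi : p i <;> simp [d, hi, hc, hbc], sum_eq, prod_ite, sum_ite]
  simp [mul_div_assoc]

lemma card_filter_univ_coe_sort {α : Type*} (s : Finset α) (p : α → Prop) [DecidablePred p] :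
    #{i : s | p i} = #{a ∈ s | p a} := by
  rw [card_filter, card_filter]
  exact sum_coe_sort s fun a => if p a then 1 else 0

section redundancy

variable {k : ℕ}

lemma cast_two_mul_sub_one (hk : 1 ≤ k) : ((2 * k - 1 : ℕ) : ℝ) = 2 * k - 1 := by
  push_cast [Nat.cast_sub (by omega : 1 ≤ 2 * k)]
  ring

lemma redExpert_mul_redExpert (i j x : Fin (2 * k - 1)) :
    redExpert k i x * redExpert k j x =
      if (i : ℕ) < k ∧ (j : ℕ) < k then (if (x : ℕ) < k then 1 else 0)
      else if i = j then (if x = i then 1 else 0) else 0 := by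
  unfold redExpert
  split_ifs <;> simp_all [Fin.ext_iff]

lemma redExp_redExpert_mul (hk : 1 ≤ k) (i j : Fin (2 * k - 1)) :
    redExp k (fun x => redExpert k i x * redExpert k j x) =
      if (i : ℕ) < k ∧ (j : ℕ) < k then (k : ℝ) / (2 * k - 1)
      else if i = j then 1 / (2 * k - 1) else 0 := by
  simp only [redExp, redExpert_mul_redExpert, cast_two_mul_sub_one hk]
  split_ifs <;> simp [sum_boole, Fin.card_filter_val_lt, show min (2 * k - 1) k = k by omega]

lemma redImp_eq (hk : 1 ≤ k) (e : Fin (2 * k - 1)) :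
    redImp k e = √(if (e : ℕ) < k then (k : ℝ) / (2 * k - 1) else 1 / (2 * k - 1)) := by
  simp only [redImp, sq, redExp_redExpert_mul hk, and_self, if_true]

lemma sqrt_sqrt_mul_sqrt_mul_self_eq_rpow {c : ℝ} (hc : 0 ≤ c) :
    √(√c * √c) * c = c ^ ((3 : ℝ) / 2) := by
  rw [Real.mul_self_sqrt hc, show (3 : ℝ) / 2 = 1 / 2 + 1 by norm_num,
    Real.rpow_add' hc (by norm_num), Real.rpow_one, Real.sqrt_eq_rpow]

lemma redKer_apply (hk : 1 ≤ k) (i j : Fin (2 * k - 1)) :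
    redKer k i j = if (i : ℕ) < k ∧ (j : ℕ) < k then redAlpha k
      else if i = j then redBeta k else 0 := by
  have hN : (0 : ℝ) < 2 * k - 1 := by
    have : (1 : ℝ) ≤ k := by exact_mod_cast hk
    linarith
  simp only [redKer, redImp_eq hk, redExp_redExpert_mul hk]
  by_cases hblock : (i : ℕ) < k ∧ (j : ℕ) < k
  · rw [if_pos hblock.1, if_pos hblock.2, if_pos hblock, if_pos hblock, redAlpha]
    exact sqrt_sqrt_mul_sqrt_mul_self_eq_rpow (by positivity)
  by_cases hij : i = j
  · subst hij
    have hi : ¬(i : ℕ) < k := by tauto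
    rw [if_neg hi, if_neg hblock, if_neg hblock, if_pos rfl, if_pos rfl, redBeta]
    exact sqrt_sqrt_mul_sqrt_mul_self_eq_rpow (by positivity)
  · rw [if_neg hblock, if_neg hblock, if_neg hij, if_neg hij, mul_zero]

lemma redAlpha_pos (hk : 1 ≤ k) : 0 < redAlpha k := by
  have : (1 : ℝ) ≤ k := by exact_mod_cast hk
  exact Real.rpow_pos_of_pos (div_pos (by linarith) (by linarith)) _

lemma redBeta_pos (hk : 1 ≤ k) : 0 < redBeta k := by
  have : (1 : ℝ) ≤ k := by exact_mod_cast hk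
  exact Real.rpow_pos_of_pos (div_pos one_pos (by linarith)) _

lemma subK_redKer (hk : 1 ≤ k) (S : Finset (Fin (2 * k - 1))) :
    subK (redKer k) S = Matrix.of fun i j : S =>
      if i.1.val < k ∧ j.1.val < k then redAlpha k else if i = j then redBeta k else 0 := by
  ext i j
  simp only [subK, submatrix_apply, of_apply, redKer_apply hk, Subtype.ext_iff]

lemma det_subK_redKer_add_smul_one (hk : 1 ≤ k) (S : Finset (Fin (2 * k - 1))) (hS : #S = k) :
    (subK (redKer k) S + redBeta k • 1).det = redD k #{e ∈ S | e.val < k} := by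
  have hβ := redBeta_pos hk
  rw [subK_redKer hk, det_of_ite_and_add_smul_one _ _ _ _ hβ.ne' (by positivity),
    card_filter_univ_coe_sort S (fun e => e.val < k),
    card_filter_univ_coe_sort S (fun e => ¬e.val < k)]
  set t := #{e ∈ S | e.val < k}
  have ht : t ≤ k := (card_filter_le _ _).trans hS.le
  have hcompl : #{e ∈ S | ¬e.val < k} = k - t := by
    have := card_filter_add_card_filter_not (s := S) (p := fun e : Fin (2 * k - 1) => e.val < k)
    omega
  have hsplit : redBeta k ^ t * redBeta k ^ (k - t) = redBeta k ^ (k - 1) * redBeta k := by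
    rw [← pow_succ, ← pow_add]
    congr 1
    omega
  rw [hcompl, redD, ← two_mul, mul_pow]
  calc redBeta k ^ t * (2 ^ (k - t) * redBeta k ^ (k - t)) * (1 + t * redAlpha k / redBeta k)
      = redBeta k ^ t * redBeta k ^ (k - t) * 2 ^ (k - t) * (1 + t * redAlpha k / redBeta k) := by
        ring
    _ = redBeta k ^ (k - 1) * 2 ^ (k - t) * (redBeta k + t * redAlpha k) := by
        rw [hsplit]
        field_simp

lemma redD_pos (hk : 1 ≤ k) (t : ℕ) : 0 < redD k t := by
  have := redAlpha_pos hk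
  have := redBeta_pos hk
  unfold redD
  positivity

lemma redD_succ_lt {t : ℕ} (ht : 1 ≤ t) (htk : t < k) : redD k (t + 1) < redD k t := by
  have hα := redAlpha_pos (k := k) (by omega)
  have hβ := redBeta_pos (k := k) (by omega)
  have ht' : (1 : ℝ) ≤ t := by exact_mod_cast ht
  have hpow : (2 : ℝ) ^ (k - t) = 2 * 2 ^ (k - (t + 1)) := by
    rw [← pow_succ']
    congr 1
    omega
  have hfactor : redBeta k + (t + 1) * redAlpha k < 2 * (redBeta k + t * redAlpha k) := by
    nlinarith
  rw [redD, redD, hpow]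
  push_cast
  calc redBeta k ^ (k - 1) * 2 ^ (k - (t + 1)) * (redBeta k + (t + 1) * redAlpha k)
      < redBeta k ^ (k - 1) * 2 ^ (k - (t + 1)) * (2 * (redBeta k + t * redAlpha k)) := by
        gcongr
    _ = redBeta k ^ (k - 1) * (2 * 2 ^ (k - (t + 1))) * (redBeta k + t * redAlpha k) := by ring

lemma redD_strictAntiOn : StrictAntiOn (redD k) (Set.Icc 1 k) :=
  strictAntiOn_of_succ_lt Set.ordConnected_Icc fun t _ ht ht' => by
    rw [Order.succ_eq_add_one] at ht' ⊢
    exact redD_succ_lt ht.1 ht'.2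

lemma card_univ_filter_val_lt (hk : 1 ≤ k) : #{e : Fin (2 * k - 1) | e.val < k} = k := by
  rw [Fin.card_filter_val_lt]
  omega

lemma card_univ_filter_not_val_lt (hk : 1 ≤ k) :
    #{e : Fin (2 * k - 1) | ¬e.val < k} = k - 1 := by
  have := card_filter_add_card_filter_not (s := univ) (p := fun e : Fin (2 * k - 1) => e.val < k)
  rw [card_univ_filter_val_lt hk, card_univ, Fintype.card_fin] at this
  omega

lemma one_le_card_filter_val_lt (hk : 1 ≤ k) {S : Finset (Fin (2 * k - 1))} (hS : #S = k) :
    1 ≤ #{e ∈ S | e.val < k} := by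
  have hsplit :=
    card_filter_add_card_filter_not (s := S) (p := fun e : Fin (2 * k - 1) => e.val < k)
  have hle : #{e ∈ S | ¬e.val < k} ≤ k - 1 :=
    card_univ_filter_not_val_lt hk ▸ card_le_card (filter_subset_filter _ (subset_univ S))
  omega

lemma forall_le_val_mem_of_card_filter_val_lt_eq_one (hk : 1 ≤ k) {S : Finset (Fin (2 * k - 1))}
    (hS : #S = k) (h1 : #{e ∈ S | e.val < k} = 1) (e : Fin (2 * k - 1)) (he : k ≤ e.val) :
    e ∈ S := by
  have hsplit :=
    card_filter_add_card_filter_not (s := S) (p := fun e : Fin (2 * k - 1) => e.val < k)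
  have hall : {e ∈ S | ¬e.val < k} = ({e | ¬e.val < k} : Finset (Fin (2 * k - 1))) :=
    eq_of_subset_of_card_le (filter_subset_filter _ (subset_univ S))
      (by rw [card_univ_filter_not_val_lt hk]; omega)
  have : e ∈ {e ∈ S | ¬e.val < k} := by
    rw [hall]
    simpa using he
  exact (mem_filter.mp this).1

lemma exists_card_eq_card_filter_val_lt_eq_one (hk : 1 ≤ k) :
    ∃ T : Finset (Fin (2 * k - 1)), #T = k ∧ #{e ∈ T | e.val < k} = 1 := by
  let e₀ : Fin (2 * k - 1) := ⟨0, by omega⟩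
  have he₀ : e₀ ∉ ({e | ¬e.val < k} : Finset (Fin (2 * k - 1))) := by simp [e₀]; omega
  refine ⟨insert e₀ ({e | ¬e.val < k} : Finset (Fin (2 * k - 1))), ?_, ?_⟩
  · rw [card_insert_of_notMem he₀, card_univ_filter_not_val_lt hk]
    omega
  · rw [filter_insert, if_pos (by simp [e₀]; omega), filter_filter]
    simp

lemma card_filter_val_lt_eq_one_of_isMax (hk : 1 ≤ k) {S : Finset (Fin (2 * k - 1))}
    (hS : #S = k)
    (hmax : ∀ T : Finset (Fin (2 * k - 1)), #T = k →
      Real.log (subK (redKer k) T + redBeta k • 1).det ≤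
        Real.log (subK (redKer k) S + redBeta k • 1).det) :
    #{e ∈ S | e.val < k} = 1 := by
  obtain ⟨T, hT, hT1⟩ := exists_card_eq_card_filter_val_lt_eq_one hk
  have hS1 := one_le_card_filter_val_lt hk hS
  have hSk : #{e ∈ S | e.val < k} ≤ k := (card_filter_le _ _).trans hS.le
  have hle := hmax T hT
  rw [det_subK_redKer_add_smul_one hk S hS, det_subK_redKer_add_smul_one hk T hT, hT1,
    Real.log_le_log_iff (redD_pos hk _) (redD_pos hk _),
    redD_strictAntiOn.le_iff_ge ⟨le_rfl, hk⟩ ⟨hS1, hSk⟩] at hle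
  omega

end redundancy

/-- In the redundancy construction with `λ = β`:
(1) for any size-`K` subset `S` containing exactly `t` experts from the identical block
(`1 ≤ t ≤ K`), `det(𝒦_S + λI) = D(t) = β^{K−1}·2^{K−t}·(β + tα)`;
(2) `D(t)` is strictly decreasing in `t` on `{1,…,K}`;
(3) consequently every size-`K` maximizer of `log det(𝒦_S + λI)` contains exactly one
expert from the identical block together with all `K − 1` specialists. -/
theorem red_construction_det (k : ℕ) (hk : 2 ≤ k) :
    (∀ S : Finset (Fin (2 * k - 1)), S.card = k →
        ∀ t : ℕ, 1 ≤ t → t ≤ k → (S.filter fun e : Fin (2 * k - 1) => (e : ℕ) < k).card = t →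
          (subK (redKer k) S + redBeta k • 1).det = redD k t) ∧
      (∀ t : ℕ, 1 ≤ t → t < k → redD k (t + 1) < redD k t) ∧
      (∀ S : Finset (Fin (2 * k - 1)), S.card = k →
        (∀ T : Finset (Fin (2 * k - 1)), T.card = k →
          Real.log (subK (redKer k) T + redBeta k • 1).det ≤
            Real.log (subK (redKer k) S + redBeta k • 1).det) →
        (S.filter fun e : Fin (2 * k - 1) => (e : ℕ) < k).card = 1 ∧
          ∀ e : Fin (2 * k - 1), k ≤ (e : ℕ) → e ∈ S) := by
  have hk' : 1 ≤ k := by omega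
  refine ⟨fun S hS t _ _ hSt => hSt ▸ det_subK_redKer_add_smul_one hk' S hS,
    fun t ht htk => redD_succ_lt ht htk, fun S hS hmax => ?_⟩
  have hS1 := card_filter_val_lt_eq_one_of_isMax hk' hS hmax
  exact ⟨hS1, forall_le_val_mem_of_card_filter_val_lt_eq_one hk' hS hS1⟩
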